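/- For each n ∈ ℕ let (X_n, d_n) be a compact metric space with d_n ≤ 1, and let f_n : X_n → X_n be a homeomorphism with the two-sided limit shadowing property (with respect to d_n). Equip X = Π_{n∈ℕ} X_n with the metric D(x,y) = sup_{n∈ℕ} d_n(x_n, y_n)/2^n and let F : X → X be defined by F(x)_n = f_n(x_n). Then F is a homeomorphism of the compact metric space (X, D) and has the two-sided limit shadowing property. -/

import Mathlib

open Filter Topology

/-- `g` has the two-sided limit shadowing property with respect to the distance
function `ρ`: every sequence with `ρ(g(x i), x (i+1)) → 0` as `|i| → ∞` is shadowed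
in the sense that `ρ(g^i(y), x i) → 0` as `|i| → ∞` for some `y`. -/
def TwoSidedLimitShadowingD {Y : Type*} (ρ : Y → Y → ℝ) (g : Y ≃ Y) : Prop :=
  ∀ x : ℤ → Y,
    Tendsto (fun i : ℤ => ρ (g (x i)) (x (i + 1))) cofinite (𝓝 0) →
    ∃ y : Y, Tendsto (fun i : ℤ => ρ ((g ^ i) y) (x i)) cofinite (𝓝 0)

/-- The metric `D(x,y) = sup_n d_n(x_n, y_n) / 2^n` on a countable product. -/
noncomputable def piDist {X : ℕ → Type*} [∀ n, MetricSpace (X n)]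
    (x y : ∀ n, X n) : ℝ :=
  ⨆ n : ℕ, dist (x n) (y n) / (2 : ℝ) ^ n


/-! Since the metrics are uniformly bounded, the weights `2^{-n}` make the tail of the supremum
defining `D` uniformly small, so `D(u i, v i) → 0` along any filter exactly when every coordinate
distance `d_n(u i n, v i n)` tends to `0`. A limit pseudo-orbit of `F` is therefore a limit
pseudo-orbit of every `f_n` in its coordinates, and the point whose coordinates shadow them shadows
it for `F`, because the iterates of `F` act coordinatewise. -/

lemma Equiv.piCongrRight_zpow {ι : Type*} {X : ι → Type*} (g : ∀ n, X n ≃ X n) (i : ℤ) :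
    Equiv.piCongrRight g ^ i = Equiv.piCongrRight fun n => g n ^ i := by
  induction i using Int.induction_on with
  | zero => rfl
  | succ k ih =>
    rw [zpow_add_one, ih]
    ext x n
    simp [zpow_add_one]
  | pred k ih =>
    rw [zpow_sub_one, ih]
    ext x n
    simp [zpow_sub_one]

section piDist

variable {X : ℕ → Type*} [∀ n, MetricSpace (X n)] {C : ℝ}

lemma dist_div_two_pow_le (hd : ∀ n, ∀ x y : X n, dist x y ≤ C) (x y : ∀ n, X n) (n : ℕ) :
    dist (x n) (y n) / 2 ^ n ≤ C * (1 / 2) ^ n := by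
  rw [one_div_pow, mul_one_div]
  gcongr
  exact hd n _ _

lemma bddAbove_range_dist_div_two_pow (hd : ∀ n, ∀ x y : X n, dist x y ≤ C)
    (x y : ∀ n, X n) : BddAbove (Set.range fun n => dist (x n) (y n) / (2 : ℝ) ^ n) := by
  refine ⟨max C 0, ?_⟩
  rintro _ ⟨n, rfl⟩
  calc dist (x n) (y n) / 2 ^ n ≤ C * (1 / 2) ^ n := dist_div_two_pow_le hd x y n
    _ ≤ max C 0 * 1 := by gcongr; exacts [le_max_left _ _, pow_le_one₀ (by norm_num) (by norm_num)]
    _ = max C 0 := mul_one _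

lemma dist_div_two_pow_le_piDist (hd : ∀ n, ∀ x y : X n, dist x y ≤ C) (x y : ∀ n, X n)
    (n : ℕ) : dist (x n) (y n) / 2 ^ n ≤ piDist x y :=
  le_ciSup (bddAbove_range_dist_div_two_pow hd x y) n

lemma piDist_nonneg (hd : ∀ n, ∀ x y : X n, dist x y ≤ C) (x y : ∀ n, X n) :
    0 ≤ piDist x y :=
  (by positivity : (0 : ℝ) ≤ dist (x 0) (y 0) / 2 ^ 0).trans (dist_div_two_pow_le_piDist hd x y 0)

lemma piDist_le_of_forall_lt {x y : ∀ n, X n} (hd : ∀ n, ∀ x y : X n, dist x y ≤ C) {ε : ℝ}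
    (N : ℕ) (hhead : ∀ n < N, dist (x n) (y n) / 2 ^ n ≤ ε) (htail : C * (1 / 2) ^ N ≤ ε) :
    piDist x y ≤ ε := by
  refine ciSup_le fun n => ?_
  rcases lt_or_ge n N with hn | hn
  · exact hhead n hn
  · have hC : 0 ≤ C := dist_nonneg.trans (hd n (x n) (x n))
    calc dist (x n) (y n) / 2 ^ n ≤ C * (1 / 2) ^ n := dist_div_two_pow_le hd x y n
      _ ≤ C * (1 / 2) ^ N :=
        mul_le_mul_of_nonneg_left (pow_le_pow_of_le_one (by norm_num) (by norm_num) hn) hC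
      _ ≤ ε := htail

lemma tendsto_piDist_nhds_zero_iff {α : Type*} {l : Filter α}
    (hd : ∀ n, ∀ x y : X n, dist x y ≤ C) {u v : α → ∀ n, X n} :
    Tendsto (fun a => piDist (u a) (v a)) l (𝓝 0) ↔
      ∀ n, Tendsto (fun a => dist (u a n) (v a n)) l (𝓝 0) := by
  constructor
  · intro h n
    have hn : Tendsto (fun a => dist (u a n) (v a n) / 2 ^ n) l (𝓝 0) :=
      squeeze_zero (fun _ => by positivity) (fun a => dist_div_two_pow_le_piDist hd _ _ n) h
    simpa using hn.mul_const ((2 : ℝ) ^ n)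
  · intro h
    refine tendsto_order.2 ⟨fun a ha => .of_forall fun _ => ha.trans_le (piDist_nonneg hd _ _),
      fun ε hε => ?_⟩
    obtain ⟨N, hN⟩ : ∃ N : ℕ, C * (1 / 2) ^ N < ε / 2 :=
      ((tendsto_pow_atTop_nhds_zero_of_lt_one (by norm_num) (by norm_num)).const_mul C
        |>.eventually (gt_mem_nhds (by simpa using half_pos hε))).exists
    have hhead : ∀ᶠ a in l, ∀ n < N, dist (u a n) (v a n) / 2 ^ n < ε / 2 := by
      refine (eventually_all_finite (Set.finite_lt_nat N)).2 fun n _ => ?_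
      exact ((h n).div_const _).eventually (gt_mem_nhds (by simpa using half_pos hε))
    filter_upwards [hhead] with a ha
    exact (piDist_le_of_forall_lt hd N (fun n hn => (ha n hn).le) hN.le).trans_lt (half_lt_self hε)

theorem TwoSidedLimitShadowingD.piCongrRight (hd : ∀ n, ∀ x y : X n, dist x y ≤ C)
    {g : ∀ n, X n ≃ X n} (hg : ∀ n, TwoSidedLimitShadowingD dist (g n)) :
    TwoSidedLimitShadowingD piDist (Equiv.piCongrRight g) := by
  intro x hx
  rw [tendsto_piDist_nhds_zero_iff hd] at hx
  choose y hy using fun n => hg n (fun i => x i n) (hx n)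
  refine ⟨y, (tendsto_piDist_nhds_zero_iff hd).2 fun n => ?_⟩
  simpa [Equiv.piCongrRight_zpow] using hy n

end piDist

theorem stmt19_general {X : ℕ → Type*} [∀ n, MetricSpace (X n)]
    (hd : ∀ n, ∀ x y : X n, dist x y ≤ 1)
    (f : ∀ n, X n ≃ₜ X n)
    (hf : ∀ n, TwoSidedLimitShadowingD dist (f n).toEquiv) :
    IsHomeomorph (⇑(Equiv.piCongrRight fun n => (f n).toEquiv)) ∧
    TwoSidedLimitShadowingD piDist (Equiv.piCongrRight fun n => (f n).toEquiv) :=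
  ⟨(Homeomorph.piCongrRight f).isHomeomorph, TwoSidedLimitShadowingD.piCongrRight hd hf⟩

/-- If each `f n` is a homeomorphism of a compact metric space `X n` (with metric
`≤ 1`) having the two-sided limit shadowing property, then the product map `F` on
`Π n, X n` (with the metric `D`, which induces the product topology) is a
homeomorphism with the two-sided limit shadowing property. -/
theorem stmt19 {X : ℕ → Type*} [∀ n, MetricSpace (X n)] [∀ n, CompactSpace (X n)]
    (hd : ∀ n, ∀ x y : X n, dist x y ≤ 1)
    (f : ∀ n, X n ≃ₜ X n)
    (hf : ∀ n, TwoSidedLimitShadowingD dist (f n).toEquiv) :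
    IsHomeomorph (⇑(Equiv.piCongrRight fun n => (f n).toEquiv)) ∧
    TwoSidedLimitShadowingD piDist (Equiv.piCongrRight fun n => (f n).toEquiv) :=
  stmt19_general hd f hf
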